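/- arXiv:2407.09582 — 2 statements merged into one kernel-verified Lean document; each statement's English description precedes it below -/
import Mathlib

section
/- Let d ≥ 1 and let X be a d×d real symmetric positive definite matrix such that R * X * Rᵀ = X for every R in the special orthogonal group SO(d) (real orthogonal matrices of determinant 1). Then there exists a real number c > 0 such that X = c • I, where I is the identity matrix. -/
/-!
Conjugating by the rotation through a right angle in the `(i, j)`-coordinate plane moves the
entry `X j j` to position `(i, i)` and `-X j i` to position `(i, j)`. Invariance under these
rotations therefore makes the diagonal of `X` constant and, together with symmetry, makes every
off-diagonal entry equal to its own negative, hence zero. Positive definiteness makes the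
diagonal entry positive.
-/

open Matrix

namespace Matrix

variable {n R : Type*} [Fintype n] [DecidableEq n] [CommRing R]

variable (R) in
def quarterTurn (i j : n) : Matrix n n R :=
  swap R i j * diagonal (Function.update 1 i (-1))

lemma quarterTurn_mul_transpose (i j : n) : quarterTurn R i j * (quarterTurn R i j)ᵀ = 1 := by
  have hsign : diagonal (Function.update (1 : n → R) i (-1)) *
      diagonal (Function.update 1 i (-1)) = 1 := by
    rw [diagonal_mul_diagonal, ← diagonal_one]
    congr 1
    ext a
    by_cases ha : a = i <;> simp [ha]
  rw [quarterTurn, transpose_mul, diagonal_transpose, transpose_swap, mul_assoc,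
    ← mul_assoc (diagonal _), hsign, one_mul, swap_mul_self]

lemma det_quarterTurn {i j : n} (hij : i ≠ j) : (quarterTurn R i j).det = 1 := by
  rw [quarterTurn, det_mul, swap, det_permutation, Equiv.Perm.sign_swap hij, det_diagonal,
    Finset.prod_update_of_mem (Finset.mem_univ i)]
  simp

lemma quarterTurn_mul_mul_transpose (X : Matrix n n R) (i j : n) :
    quarterTurn R i j * X * (quarterTurn R i j)ᵀ =
      swap R i j *
        (diagonal (Function.update 1 i (-1)) * X * diagonal (Function.update 1 i (-1))) *
          swap R i j := by
  simp only [quarterTurn, transpose_mul, diagonal_transpose, transpose_swap, mul_assoc]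

lemma quarterTurn_mul_mul_transpose_apply_left_left (X : Matrix n n R) {i j : n} (hij : i ≠ j) :
    (quarterTurn R i j * X * (quarterTurn R i j)ᵀ) i i = X j j := by
  simp [quarterTurn_mul_mul_transpose, hij.symm]

lemma quarterTurn_mul_mul_transpose_apply_left_right (X : Matrix n n R) {i j : n} (hij : i ≠ j) :
    (quarterTurn R i j * X * (quarterTurn R i j)ᵀ) i j = -X j i := by
  simp [quarterTurn_mul_mul_transpose, hij.symm]

theorem IsSymm.eq_smul_one_of_forall_quarterTurn_conj [IsAddTorsionFree R] {X : Matrix n n R}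
    (hX : X.IsSymm) (hQ : ∀ i j, i ≠ j → quarterTurn R i j * X * (quarterTurn R i j)ᵀ = X)
    (i₀ : n) : X = X i₀ i₀ • 1 := by
  ext k l
  rcases eq_or_ne k l with rfl | hkl
  · rcases eq_or_ne k i₀ with rfl | hk
    · simp
    · have h := quarterTurn_mul_mul_transpose_apply_left_left X hk
      rw [hQ k i₀ hk] at h
      simp [h]
  · have h := quarterTurn_mul_mul_transpose_apply_left_right X hkl
    rw [hQ k l hkl, hX.apply k l] at h
    simp [hkl, self_eq_neg.mp h]

end Matrix

/-- If a real symmetric positive definite `d × d` matrix `X` satisfies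
`R * X * Rᵀ = X` for every `R` in the special orthogonal group `SO(d)`, then `X = c • 1`
for some real `c > 0`. -/
theorem fixed_by_SO_implies_scalar (d : ℕ) (hd : 1 ≤ d)
    (X : Matrix (Fin d) (Fin d) ℝ) (hX : X.PosDef)
    (hfix : ∀ R : Matrix (Fin d) (Fin d) ℝ, R * Rᵀ = 1 → R.det = 1 → R * X * Rᵀ = X) :
    ∃ c : ℝ, 0 < c ∧ X = c • (1 : Matrix (Fin d) (Fin d) ℝ) := by
  have hsymm : X.IsSymm := isHermitian_iff_isSymm.mp hX.isHermitian
  have hscalar := hsymm.eq_smul_one_of_forall_quarterTurn_conj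
    (fun i j hij => hfix _ (quarterTurn_mul_transpose i j) (det_quarterTurn hij)) ⟨0, hd⟩
  exact ⟨_, hX.diag_pos, hscalar⟩
end

section
/- Let d ≥ 1 and let k₁ > 0 and k₂ > 0 be real constants. Then the function (λ₁, …, λ_d) ↦ (Σᵢ (log λᵢ)²) · (Πᵢ λᵢ^{k₁}) · exp(-½ Σᵢ λᵢ) · Π_{i > j} |λᵢ - λⱼ|^{k₂} is integrable on the open positive orthant (0, ∞)^d with respect to Lebesgue measure. -/
/-!
On the positive orthant every factor `|λᵢ - λⱼ|` is at most `∏ⱼ max λⱼ 1`, so the Vandermonde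
factor is bounded by `∏ⱼ (λⱼ ^ c + 1)` with `c = k₂ · #{(i, j) | j < i}`. The integrand is then
dominated by `Σᵢ (log λᵢ)² ∏ⱼ w λⱼ` with `w x = x ^ k₁ (x ^ c + 1) e^{-x/2}`, a sum of products of
functions of one variable, which is integrable as soon as `w` and `log² · w` are integrable on
`(0, ∞)`. Both reduce to the Gamma integrals `∫ x ^ s e^{-x/2}`, `s > -1`, because
`(log x)² ≤ 4 ε⁻² (x ^ ε + x ^ (-ε))`.
-/

open MeasureTheory Real Set

section OneVariable

variable {s c b : ℝ}

theorem integrableOn_rpow_mul_exp_neg_mul (hs : -1 < s) (hb : 0 < b) :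
    IntegrableOn (fun x : ℝ => x ^ s * exp (-b * x)) (Ioi 0) := by
  simpa using integrableOn_rpow_mul_exp_neg_mul_rpow hs one_pos hb

theorem sq_log_le_rpow_add_rpow_neg {x ε : ℝ} (hx : 0 < x) (hε : 0 < ε) :
    log x ^ 2 ≤ 4 / ε ^ 2 * (x ^ ε + x ^ (-ε)) := by
  wlog h1x : 1 ≤ x generalizing x
  · have := this (inv_pos.2 hx) (one_le_inv₀ hx |>.2 (not_le.1 h1x).le)
    rwa [log_inv, neg_sq, inv_rpow hx.le, inv_rpow hx.le, ← rpow_neg hx.le, ← rpow_neg hx.le,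
      neg_neg, add_comm] at this
  have hlog : log x ≤ x ^ (ε / 2) / (ε / 2) := log_le_rpow_div hx.le (half_pos hε)
  have hsq : (x ^ (ε / 2)) ^ 2 = x ^ ε := by
    rw [← rpow_natCast, ← rpow_mul hx.le]; norm_num
  calc log x ^ 2 ≤ (x ^ (ε / 2) / (ε / 2)) ^ 2 := pow_le_pow_left₀ (log_nonneg h1x) hlog 2
    _ = 4 / ε ^ 2 * x ^ ε := by rw [div_pow, hsq]; field_simp; ring
    _ ≤ 4 / ε ^ 2 * (x ^ ε + x ^ (-ε)) := by
      gcongr; exact le_add_of_nonneg_right (rpow_pos_of_pos hx _).le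

theorem integrableOn_sq_log_mul_rpow_mul_exp_neg_mul (hs : -1 < s) (hb : 0 < b) :
    IntegrableOn (fun x : ℝ => log x ^ 2 * (x ^ s * exp (-b * x))) (Ioi 0) := by
  obtain ⟨ε, hε, hsε⟩ : ∃ ε, 0 < ε ∧ -1 < s - ε := ⟨(s + 1) / 2, by linarith, by linarith⟩
  have hdom := ((integrableOn_rpow_mul_exp_neg_mul (s := s + ε) (by linarith) hb).add
    (integrableOn_rpow_mul_exp_neg_mul hsε hb)).const_mul (4 / ε ^ 2)
  refine hdom.mono' (by fun_prop) ?_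
  filter_upwards [ae_restrict_mem measurableSet_Ioi] with x (hx : 0 < x)
  calc ‖log x ^ 2 * (x ^ s * exp (-b * x))‖
      = log x ^ 2 * (x ^ s * exp (-b * x)) := norm_of_nonneg (by positivity)
    _ ≤ 4 / ε ^ 2 * (x ^ ε + x ^ (-ε)) * (x ^ s * exp (-b * x)) := by
      gcongr; exact sq_log_le_rpow_add_rpow_neg hx hε
    _ = 4 / ε ^ 2 * (x ^ (s + ε) * exp (-b * x) + x ^ (s - ε) * exp (-b * x)) := by
      rw [rpow_add hx, rpow_sub hx, rpow_neg hx.le]; field_simp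

theorem rpow_mul_rpow_add_one {x : ℝ} (hx : 0 < x) (s c : ℝ) :
    x ^ s * (x ^ c + 1) = x ^ (s + c) + x ^ s := by
  rw [rpow_add hx]; ring

theorem integrableOn_rpow_mul_rpow_add_one_mul_exp_neg_mul (hs : -1 < s) (hc : 0 ≤ c)
    (hb : 0 < b) :
    IntegrableOn (fun x : ℝ => x ^ s * (x ^ c + 1) * exp (-b * x)) (Ioi 0) :=
  ((integrableOn_rpow_mul_exp_neg_mul (s := s + c) (by linarith) hb).add
    (integrableOn_rpow_mul_exp_neg_mul hs hb)).congr_fun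
    (fun x (hx : 0 < x) => by simp only [Pi.add_apply, rpow_mul_rpow_add_one hx]; ring)
    measurableSet_Ioi

theorem integrableOn_sq_log_mul_rpow_mul_rpow_add_one_mul_exp_neg_mul (hs : -1 < s)
    (hc : 0 ≤ c) (hb : 0 < b) :
    IntegrableOn (fun x : ℝ => log x ^ 2 * (x ^ s * (x ^ c + 1) * exp (-b * x))) (Ioi 0) :=
  ((integrableOn_sq_log_mul_rpow_mul_exp_neg_mul (s := s + c) (by linarith) hb).add
    (integrableOn_sq_log_mul_rpow_mul_exp_neg_mul hs hb)).congr_fun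
    (fun x (hx : 0 < x) => by simp only [Pi.add_apply, rpow_mul_rpow_add_one hx]; ring)
    measurableSet_Ioi

end OneVariable

theorem integrableOn_univ_pi_prod {ι 𝕜 E : Type*} [Fintype ι] [NormedCommRing 𝕜]
    [MeasurableSpace E] {μ : ι → Measure E} [∀ i, SigmaFinite (μ i)] {f : ι → E → 𝕜}
    {t : ι → Set E} (hf : ∀ i, IntegrableOn (f i) (t i) (μ i)) :
    IntegrableOn (fun x : ι → E => ∏ i, f i (x i)) (univ.pi t) (Measure.pi μ) := by
  rw [IntegrableOn, Measure.restrict_pi_pi]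
  exact Integrable.fintype_prod hf

theorem integrableOn_univ_pi_sum_prod_ite {ι 𝕜 E : Type*} [Fintype ι] [DecidableEq ι]
    [NormedCommRing 𝕜] [MeasurableSpace E] {μ : Measure E} [SigmaFinite μ] {f g : E → 𝕜}
    {t : Set E} (hf : IntegrableOn f t μ) (hg : IntegrableOn g t μ) :
    IntegrableOn (fun x : ι → E => ∑ i, ∏ j, if j = i then f (x j) else g (x j))
      (univ.pi fun _ => t) (Measure.pi fun _ => μ) := by
  refine integrable_finsetSum _ fun i _ => ?_
  have hi := integrableOn_univ_pi_prod (f := fun j => if j = i then f else g) fun j => by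
    split_ifs <;> assumption
  simp only [ite_apply] at hi
  exact hi

theorem sum_prod_ite_mul_eq {ι R : Type*} [Fintype ι] [DecidableEq ι] [CommSemiring R]
    (f w : ι → R) :
    ∑ i, ∏ j, (if j = i then f j * w j else w j) = (∑ i, f i) * ∏ j, w j := by
  have hite : ∀ i j, (if j = i then f j * w j else w j) = (if j = i then f j else 1) * w j :=
    fun i j => by split_ifs <;> simp
  simp only [hite, Finset.prod_mul_distrib, Finset.prod_ite_eq', Finset.mem_univ, if_true,
    Finset.sum_mul]

theorem max_one_rpow_le {x e : ℝ} (hx : 0 ≤ x) : max x 1 ^ e ≤ x ^ e + 1 := by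
  rcases le_total x 1 with h | h
  · rw [max_eq_right h, one_rpow]; linarith [rpow_nonneg hx e]
  · rw [max_eq_left h]; linarith

theorem prod_abs_sub_rpow_le {ι : Type*} [Fintype ι] (S : Finset (ι × ι)) {l : ι → ℝ}
    (hl : ∀ j, 0 ≤ l j) {k : ℝ} (hk : 0 ≤ k) :
    ∏ p ∈ S, |l p.1 - l p.2| ^ k ≤ ∏ j, (l j ^ (k * S.card) + 1) := by
  set M := ∏ j, max (l j) 1
  have hM : ∀ j, l j ≤ M := fun j => Finset.le_prod_max_one (Finset.mem_univ j) l
  have hM0 : 0 ≤ M := Finset.prod_nonneg fun _ _ => le_max_of_le_right zero_le_one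
  calc ∏ p ∈ S, |l p.1 - l p.2| ^ k
      ≤ ∏ _p ∈ S, M ^ k := Finset.prod_le_prod (fun _ _ => by positivity) fun p _ =>
        rpow_le_rpow (abs_nonneg _)
          (abs_sub_le_of_nonneg_of_le (hl _) (hM _) (hl _) (hM _)) hk
    _ = ∏ j, max (l j) 1 ^ (k * S.card) := by
      rw [Finset.prod_const, ← rpow_natCast, ← rpow_mul hM0,
        finsetProd_rpow _ _ fun j _ => (hl j).trans (le_max_left _ _)]
    _ ≤ ∏ j, (l j ^ (k * S.card) + 1) :=
      Finset.prod_le_prod (fun _ _ => by positivity) fun j _ => max_one_rpow_le (hl j)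

theorem norm_wishart_integrand_le {ι : Type*} [Fintype ι] (S : Finset (ι × ι)) {l : ι → ℝ}
    (hl : ∀ j, 0 < l j) (a b : ℝ) {k : ℝ} (hk : 0 ≤ k) :
    ‖(∑ i, log (l i) ^ 2) * (∏ i, l i ^ a) * exp (-b * ∑ i, l i) *
        ∏ p ∈ S, |l p.1 - l p.2| ^ k‖ ≤
      (∑ i, log (l i) ^ 2) * ∏ j, (l j ^ a * (l j ^ (k * S.card) + 1) * exp (-b * l j)) := by
  have hprod : 0 ≤ ∏ i, l i ^ a := Finset.prod_nonneg fun i _ => rpow_nonneg (hl i).le _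
  rw [norm_of_nonneg (by positivity)]
  calc _ ≤ (∑ i, log (l i) ^ 2) * (∏ i, l i ^ a) * exp (-b * ∑ i, l i) *
        ∏ j, (l j ^ (k * S.card) + 1) := by
        gcongr; exact prod_abs_sub_rpow_le S (fun j => (hl j).le) hk
    _ = _ := by simp only [Finset.prod_mul_distrib, exp_sum, Finset.mul_sum]; ring

theorem wishart_eigenvalue_second_moment_integrable_general (d : ℕ)
    (k₁ k₂ : ℝ) (hk₁ : 0 < k₁) (hk₂ : 0 < k₂) :
    IntegrableOn
      (fun l : Fin d → ℝ =>
        (∑ i, Real.log (l i) ^ 2) * (∏ i, l i ^ k₁) * Real.exp (-(1 / 2) * ∑ i, l i) *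
          ∏ p ∈ Finset.univ.filter (fun p : Fin d × Fin d => p.2 < p.1), |l p.1 - l p.2| ^ k₂)
      {l : Fin d → ℝ | ∀ i, 0 < l i} volume := by
  classical
  set S := Finset.univ.filter fun p : Fin d × Fin d => p.2 < p.1
  set w : ℝ → ℝ := fun x => x ^ k₁ * (x ^ (k₂ * S.card) + 1) * exp (-(1 / 2) * x)
  have hw : IntegrableOn w (Ioi 0) :=
    integrableOn_rpow_mul_rpow_add_one_mul_exp_neg_mul (by linarith) (by positivity) (by norm_num)
  have hlog_w : IntegrableOn (fun x => log x ^ 2 * w x) (Ioi 0) :=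
    integrableOn_sq_log_mul_rpow_mul_rpow_add_one_mul_exp_neg_mul (by linarith) (by positivity)
      (by norm_num)
  have hpi : {l : Fin d → ℝ | ∀ i, 0 < l i} = univ.pi fun _ => Ioi 0 := by ext; simp
  rw [hpi]
  refine (integrableOn_univ_pi_sum_prod_ite hlog_w hw).mono' (by fun_prop) ?_
  filter_upwards [ae_restrict_mem (MeasurableSet.univ_pi fun _ => measurableSet_Ioi)] with l hl
  rw [sum_prod_ite_mul_eq (fun j => log (l j) ^ 2) (fun j => w (l j))]
  exact norm_wishart_integrand_le S (by simpa using hl) _ _ hk₂.le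

/-- the function
`λ ↦ (Σᵢ (log λᵢ)²) · (Πᵢ λᵢ^{k₁}) · exp(-½ Σᵢ λᵢ) · Π_{i > j} |λᵢ - λⱼ|^{k₂}`
is Lebesgue-integrable on the open positive orthant `(0, ∞)^d`, for any constants
`k₁, k₂ > 0`.  (This is the integrand expressing the finiteness of the second moment of
the projective Wishart distribution with respect to the joint eigenvalue density of the
Wishart distribution.) -/
theorem wishart_eigenvalue_second_moment_integrable (d : ℕ) (hd : 1 ≤ d)
    (k₁ k₂ : ℝ) (hk₁ : 0 < k₁) (hk₂ : 0 < k₂) :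
    IntegrableOn
      (fun l : Fin d → ℝ =>
        (∑ i, Real.log (l i) ^ 2) * (∏ i, l i ^ k₁) * Real.exp (-(1 / 2) * ∑ i, l i) *
          ∏ p ∈ Finset.univ.filter (fun p : Fin d × Fin d => p.2 < p.1), |l p.1 - l p.2| ^ k₂)
      {l : Fin d → ℝ | ∀ i, 0 < l i} volume :=
  wishart_eigenvalue_second_moment_integrable_general d k₁ k₂ hk₁ hk₂
end
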